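/- arXiv:2404.04865 — 2 statements merged into one kernel-verified Lean document; each statement's English description precedes it below -/
import Mathlib

section
/- Let H be a hypothesis space and 𝒟 a prior-unknown domain space. If there exists a domain D_XY ∈ 𝒟 that has overlap between its ID and OOD distributions and satisfies inf_{h∈H} R_D^in(h) = 0 and inf_{h∈H} R_D^out(h) = 0, then inf_{h∈H} R_D^α(h) > 0 for every α ∈ (0,1), so the linear condition under risk fails; consequently, OOD detection is not learnable under risk in 𝒟 for H. -/
open MeasureTheory Filter Set
open scoped ENNReal NNReal

noncomputable section

namespace OODF

/-- A *domain*: a mixture `(1-π)·D_I + π·D_O` of an ID joint distribution `D_I` on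
`𝒳 × {1,…,K}` and an OOD joint distribution `D_O` on `𝒳 × {K+1}`, with class prior
`π ∈ [0,1)`.  Labels are encoded as naturals: ID labels are `{1,…,K}`, OOD label is `K+1`. -/
structure Domain (𝒳 : Type*) [MeasurableSpace 𝒳] (K : ℕ) where
  DI : Measure (𝒳 × ℕ)
  DO : Measure (𝒳 × ℕ)
  prior : ℝ
  probI : IsProbabilityMeasure DI
  probO : IsProbabilityMeasure DO
  suppI : DI {p | p.2 ∉ Set.Icc 1 K} = 0
  suppO : DO {p | p.2 ≠ K + 1} = 0
  prior_mem : prior ∈ Set.Ico (0 : ℝ) 1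

variable {𝒳 : Type*} [MeasurableSpace 𝒳] {K : ℕ}

namespace Domain

/-- the mixed joint distribution `D_XY = (1-π)·D_I + π·D_O` -/
def joint (D : Domain 𝒳 K) : Measure (𝒳 × ℕ) :=
  ENNReal.ofReal (1 - D.prior) • D.DI + ENNReal.ofReal D.prior • D.DO

/-- the marginal `D_{X_I}` of the ID joint distribution on the feature space -/
def margI (D : Domain 𝒳 K) : Measure 𝒳 := D.DI.map Prod.fst

/-- the marginal `D_{X_O}` of the OOD joint distribution on the feature space -/
def margO (D : Domain 𝒳 K) : Measure 𝒳 := D.DO.map Prod.fst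

/-- the domain `D^α = (1-α)·D_I + α·D_O`, i.e. `D` with its class prior replaced by `α` -/
def withPrior (D : Domain 𝒳 K) (α : Set.Ico (0 : ℝ) 1) : Domain 𝒳 K :=
  { D with prior := α.1, prior_mem := α.2 }

end Domain

/-- a prior-unknown domain space: closed under changing the class prior -/
def PriorUnknown (𝒟 : Set (Domain 𝒳 K)) : Prop :=
  ∀ D ∈ 𝒟, ∀ α : Set.Ico (0 : ℝ) 1, D.withPrior α ∈ 𝒟

/-- the risk `R_D(h)` w.r.t. the mixed joint distribution -/
def risk (ℓ : ℕ → ℕ → ℝ) (D : Domain 𝒳 K) (h : 𝒳 → ℕ) : ℝ :=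
  ∫ p, ℓ (h p.1) p.2 ∂D.joint

/-- the ID risk `R_D^in(h)` -/
def riskIn (ℓ : ℕ → ℕ → ℝ) (D : Domain 𝒳 K) (h : 𝒳 → ℕ) : ℝ :=
  ∫ p, ℓ (h p.1) p.2 ∂D.DI

/-- the OOD risk `R_D^out(h)` -/
def riskOut (ℓ : ℕ → ℕ → ℝ) (D : Domain 𝒳 K) (h : 𝒳 → ℕ) : ℝ :=
  ∫ p, ℓ (h p.1) (K + 1) ∂D.DO

/-- the `α`-risk `R_D^α(h) = (1-α)·R_D^in(h) + α·R_D^out(h)` -/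
def riskA (ℓ : ℕ → ℕ → ℝ) (D : Domain 𝒳 K) (h : 𝒳 → ℕ) (α : ℝ) : ℝ :=
  (1 - α) * riskIn ℓ D h + α * riskOut ℓ D h

/-- the distribution of an i.i.d. sample of size `n` from the ID joint distribution -/
def sampleMeasure (D : Domain 𝒳 K) (n : ℕ) : Measure (Fin n → 𝒳 × ℕ) :=
  letI := D.probI
  Measure.pi fun _ => D.DI

/-- An algorithm maps, for every sample size `n ≥ 1`, a labeled sample to a function on `𝒳`. -/
abbrev Algorithm (𝒳 β : Type*) := (n : ℕ) → (Fin n → 𝒳 × ℕ) → (𝒳 → β)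

/-- `A` is consistent w.r.t. `𝒟` under risk with rate `ε`: it outputs hypotheses in `H`,
the resulting risks are measurable in the sample, and the expected excess risk for samples
of size `n ≥ 1` is at most `ε n`. -/
def ConsistentRisk (ℓ : ℕ → ℕ → ℝ) (𝒟 : Set (Domain 𝒳 K)) (H : Set (𝒳 → ℕ))
    (A : Algorithm 𝒳 ℕ) (ε : ℕ → ℝ) : Prop :=
  (∀ n : ℕ, 1 ≤ n → ∀ S, A n S ∈ H) ∧
  (∀ D ∈ 𝒟, ∀ n : ℕ, 1 ≤ n → Measurable fun S : Fin n → 𝒳 × ℕ => risk ℓ D (A n S)) ∧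
  ∀ D ∈ 𝒟, ∀ n : ℕ, 1 ≤ n →
    ∫ S, (risk ℓ D (A n S) - ⨅ h : H, risk ℓ D h.1) ∂(sampleMeasure D n) ≤ ε n

/-- OOD detection is learnable under risk in `𝒟` for `H` with the given rate. -/
def LearnableRiskRate (ℓ : ℕ → ℕ → ℝ) (𝒟 : Set (Domain 𝒳 K)) (H : Set (𝒳 → ℕ))
    (ε : ℕ → ℝ) : Prop :=
  ∃ A, ConsistentRisk ℓ 𝒟 H A ε

/-- learnability of OOD detection under risk -/
def LearnableRisk (ℓ : ℕ → ℕ → ℝ) (𝒟 : Set (Domain 𝒳 K)) (H : Set (𝒳 → ℕ)) : Prop :=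
  ∃ ε : ℕ → ℝ, Antitone ε ∧ Tendsto ε atTop (nhds 0) ∧ LearnableRiskRate ℓ 𝒟 H ε

/-- `A` is strongly consistent: the expected excess `α`-risks are uniformly small over
all `α ∈ [0,1]`. -/
def StrongConsistentRisk (ℓ : ℕ → ℕ → ℝ) (𝒟 : Set (Domain 𝒳 K)) (H : Set (𝒳 → ℕ))
    (A : Algorithm 𝒳 ℕ) (ε : ℕ → ℝ) : Prop :=
  (∀ n : ℕ, 1 ≤ n → ∀ S, A n S ∈ H) ∧
  (∀ D ∈ 𝒟, ∀ n : ℕ, 1 ≤ n → ∀ α : ℝ,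
    Measurable fun S : Fin n → 𝒳 × ℕ => riskA ℓ D (A n S) α) ∧
  ∀ D ∈ 𝒟, ∀ n : ℕ, 1 ≤ n → ∀ α ∈ Set.Icc (0 : ℝ) 1,
    ∫ S, (riskA ℓ D (A n S) α - ⨅ h : H, riskA ℓ D h.1 α) ∂(sampleMeasure D n) ≤ ε n

/-- strong learnability of OOD detection under risk -/
def StrongLearnableRisk (ℓ : ℕ → ℕ → ℝ) (𝒟 : Set (Domain 𝒳 K)) (H : Set (𝒳 → ℕ)) : Prop :=
  ∃ ε : ℕ → ℝ, Antitone ε ∧ Tendsto ε atTop (nhds 0) ∧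
    ∃ A, StrongConsistentRisk ℓ 𝒟 H A ε

/-- the AUC of a ranking function `r` w.r.t. ID marginal `P` and OOD marginal `Q`:
`AUC(r) = E_{x ~ P} E_{x' ~ Q} [1_{r(x) > r(x')} + (1/2)·1_{r(x) = r(x')}]` -/
def AUC (r : 𝒳 → ℝ) (P Q : Measure 𝒳) : ℝ :=
  ∫ x, (∫ x', ((if r x' < r x then (1 : ℝ) else 0) +
      (1 / 2) * (if r x = r x' then (1 : ℝ) else 0)) ∂Q) ∂P

/-- `A` is AUC-consistent w.r.t. `𝒟` with rate `ε`. -/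
def ConsistentAUC (𝒟 : Set (Domain 𝒳 K)) (R : Set (𝒳 → ℝ))
    (A : Algorithm 𝒳 ℝ) (ε : ℕ → ℝ) : Prop :=
  (∀ n : ℕ, 1 ≤ n → ∀ S, A n S ∈ R) ∧
  (∀ D ∈ 𝒟, ∀ n : ℕ, 1 ≤ n →
    Measurable fun S : Fin n → 𝒳 × ℕ => AUC (A n S) D.margI D.margO) ∧
  ∀ D ∈ 𝒟, ∀ n : ℕ, 1 ≤ n →
    ∫ S, ((⨆ r : R, AUC r.1 D.margI D.margO) - AUC (A n S) D.margI D.margO)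
      ∂(sampleMeasure D n) ≤ ε n

/-- OOD detection is learnable under AUC in `𝒟` for `R` with the given rate. -/
def LearnableAUCRate (𝒟 : Set (Domain 𝒳 K)) (R : Set (𝒳 → ℝ)) (ε : ℕ → ℝ) : Prop :=
  ∃ A, ConsistentAUC 𝒟 R A ε

/-- learnability of OOD detection under AUC -/
def LearnableAUC (𝒟 : Set (Domain 𝒳 K)) (R : Set (𝒳 → ℝ)) : Prop :=
  ∃ ε : ℕ → ℝ, Antitone ε ∧ Tendsto ε atTop (nhds 0) ∧ LearnableAUCRate 𝒟 R ε

/-- the (topological) support of a measure -/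
def mSupport {α : Type*} [TopologicalSpace α] [MeasurableSpace α] (μ : Measure α) : Set α :=
  {x | ∀ U ∈ nhds x, 0 < μ U}

/-- the separate space `𝒟^s`: all domains whose ID and OOD marginals have disjoint supports -/
def separateSpace (𝒳 : Type*) [MeasurableSpace 𝒳] [TopologicalSpace 𝒳] (K : ℕ) :
    Set (Domain 𝒳 K) :=
  {D | mSupport D.margO ∩ mSupport D.margI = ∅}

/-- a class `G` of binary functions (encoded as predicates) shatters the finite set `C` -/
def Shatters {α : Type*} (G : Set (α → Prop)) (C : Finset α) : Prop :=
  ∀ f : α → Prop, ∃ g ∈ G, ∀ x ∈ C, g x ↔ f x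

/-- the VC dimension of a class of binary functions (encoded as predicates) -/
def VCdim {α : Type*} (G : Set (α → Prop)) : ℕ∞ :=
  sSup {n : ℕ∞ | ∃ C : Finset α, Shatters G C ∧ n = (C.card : ℕ∞)}

/-- `D` has overlap between its ID and OOD distributions: there is a σ-finite measure
w.r.t. which both marginals have densities that are simultaneously positive on a set of
positive measure. -/
def HasOverlap (D : Domain 𝒳 K) : Prop :=
  ∃ μt : Measure 𝒳, SigmaFinite μt ∧
    ∃ fI fO : 𝒳 → ℝ≥0∞, Measurable fI ∧ Measurable fO ∧
      D.margI = μt.withDensity fI ∧ D.margO = μt.withDensity fO ∧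
      0 < μt {x | 0 < fI x ∧ 0 < fO x}

/-!
On the overlap region every hypothesis pays: where it predicts `K + 1` it incurs ID loss at
density `f_I`, elsewhere OOD loss at density `f_O`. Hence
`R^α(h) ≥ min(α, 1 - α) · c · ∫ min f_I f_O > 0`, with `c` the least loss between an ID label and
`K + 1`, although both infima vanish; at `α = 1/2` this breaks the linear condition.
A learner only sees ID samples, so it cannot tell the priors apart: consistency on every `D^α`,
together with the vanishing infima, bounds its expected ID risk (`α = 0`) and its expected OOD
risk (`α → 1`) by `ε(n)`, hence its expected `R^{1/2}` too, contradicting the positive lower bound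
as `ε(n) → 0`.
-/

open scoped Topology

attribute [instance] Domain.probI Domain.probO

namespace Domain

variable (D : Domain 𝒳 K)

instance : IsProbabilityMeasure D.margI :=
  Measure.isProbabilityMeasure_map measurable_fst.aemeasurable

instance : IsProbabilityMeasure D.margO :=
  Measure.isProbabilityMeasure_map measurable_fst.aemeasurable

instance (n : ℕ) : IsProbabilityMeasure (sampleMeasure D n) := by
  unfold sampleMeasure; infer_instance

theorem ae_label_mem_DI : ∀ᵐ p ∂D.DI, p.2 ∈ Icc 1 K := ae_iff.2 D.suppI

theorem ae_label_eq_DO : ∀ᵐ p ∂D.DO, p.2 = K + 1 := ae_iff.2 D.suppO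

theorem ae_label_mem_Icc_succ_DI : ∀ᵐ p ∂D.DI, p.2 ∈ Icc 1 (K + 1) :=
  D.ae_label_mem_DI.mono fun _ hp => ⟨hp.1, hp.2.trans K.le_succ⟩

theorem ae_label_mem_Icc_succ_DO : ∀ᵐ p ∂D.DO, p.2 ∈ Icc 1 (K + 1) :=
  D.ae_label_eq_DO.mono fun p hp => hp ▸ ⟨by omega, le_rfl⟩

theorem sampleMeasure_withPrior (α : Ico (0 : ℝ) 1) (n : ℕ) :
    sampleMeasure (D.withPrior α) n = sampleMeasure D n := rfl

end Domain

theorem mul_measureReal_le_integral {α : Type*} [MeasurableSpace α] {μ : Measure α}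
    [IsFiniteMeasure μ] {f : α → ℝ} {s : Set α} {c : ℝ} (hc : 0 ≤ c) (hf0 : 0 ≤ᵐ[μ] f)
    (hf : Integrable f μ) (hs : ∀ᵐ x ∂μ, x ∈ s → c ≤ f x) : c * μ.real s ≤ ∫ x, f x ∂μ :=
  calc c * μ.real s ≤ c * μ.real {x | c ≤ f x} :=
        mul_le_mul_of_nonneg_left
          (ENNReal.toReal_mono (measure_ne_top _ _) (measure_mono_ae hs)) hc
    _ ≤ ∫ x, f x ∂μ := mul_meas_ge_le_integral_of_nonneg hf0 hf c

theorem le_of_forall_Ico_combo_le {a b a' b' : ℝ}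
    (h : ∀ α ∈ Ico (0 : ℝ) 1, (1 - α) * a + α * b ≤ (1 - α) * a' + α * b') : b ≤ b' := by
  have hlim : ∀ u v : ℝ, Tendsto (fun α : ℝ => (1 - α) * u + α * v) (𝓝[<] 1) (𝓝 v) := by
    intro u v
    have hcont : Continuous fun α : ℝ => (1 - α) * u + α * v := by fun_prop
    simpa using (hcont.tendsto 1).mono_left nhdsWithin_le_nhds
  exact le_of_tendsto_of_tendsto (hlim a b) (hlim a' b')
    (eventually_of_mem (Ico_mem_nhdsLT one_pos) h)

section Loss

variable {ℓ : ℕ → ℕ → ℝ} {B : ℝ} {h : 𝒳 → ℕ}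

theorem exists_pos_le_loss_ood (hl_nonneg : ∀ y₁ y₂, 0 ≤ ℓ y₁ y₂)
    (hl_zero : ∀ y₁ ∈ Icc 1 (K + 1), ∀ y₂ ∈ Icc 1 (K + 1), (ℓ y₁ y₂ = 0 ↔ y₁ = y₂)) :
    ∃ c > 0, ∀ y ∈ Icc 1 K, c ≤ ℓ (K + 1) y ∧ c ≤ ℓ y (K + 1) := by
  have hpos : ∀ y ∈ Icc 1 K, 0 < ℓ (K + 1) y ∧ 0 < ℓ y (K + 1) := by
    intro y hy
    have hy' : y ∈ Icc 1 (K + 1) := ⟨hy.1, hy.2.trans K.le_succ⟩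
    have hK : K + 1 ∈ Icc 1 (K + 1) := ⟨by omega, le_rfl⟩
    have hne : y ≠ K + 1 := by have := hy.2; omega
    exact ⟨(hl_nonneg _ _).lt_of_ne' fun h0 => hne ((hl_zero _ hK _ hy').1 h0).symm,
      (hl_nonneg _ _).lt_of_ne' fun h0 => hne ((hl_zero _ hy' _ hK).1 h0)⟩
  have hev : ∀ᶠ c in 𝓝[>] (0 : ℝ),
      ∀ y ∈ Finset.Icc 1 K, c ≤ ℓ (K + 1) y ∧ c ≤ ℓ y (K + 1) := by
    refine (eventually_all_finset _).2 fun y hy => nhdsWithin_le_nhds ?_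
    obtain ⟨h₁, h₂⟩ := hpos y (Finset.mem_Icc.1 hy)
    exact (eventually_le_nhds h₁).and (eventually_le_nhds h₂)
  obtain ⟨c, hc, hc0⟩ := (hev.and self_mem_nhdsWithin).exists
  exact ⟨c, hc0, fun y hy => hc y (Finset.mem_Icc.2 hy)⟩

theorem measurable_loss (hm : Measurable h) : Measurable fun p : 𝒳 × ℕ => ℓ (h p.1) p.2 :=
  (measurable_of_countable fun q : ℕ × ℕ => ℓ q.1 q.2).comp
    ((hm.comp measurable_fst).prodMk measurable_snd)

variable {μ : Measure (𝒳 × ℕ)}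

theorem ae_norm_loss_le (hl_nonneg : ∀ y₁ y₂, 0 ≤ ℓ y₁ y₂)
    (hB : ∀ y₁ ∈ Icc 1 (K + 1), ∀ y₂ ∈ Icc 1 (K + 1), ℓ y₁ y₂ ≤ B)
    (hr : ∀ x, h x ∈ Icc 1 (K + 1)) (hμ : ∀ᵐ p ∂μ, p.2 ∈ Icc 1 (K + 1)) :
    ∀ᵐ p ∂μ, ‖ℓ (h p.1) p.2‖ ≤ B :=
  hμ.mono fun p hp => (Real.norm_of_nonneg (hl_nonneg _ _)).trans_le (hB _ (hr p.1) _ hp)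

theorem integrable_loss [IsFiniteMeasure μ] (hl_nonneg : ∀ y₁ y₂, 0 ≤ ℓ y₁ y₂)
    (hB : ∀ y₁ ∈ Icc 1 (K + 1), ∀ y₂ ∈ Icc 1 (K + 1), ℓ y₁ y₂ ≤ B)
    (hm : Measurable h) (hr : ∀ x, h x ∈ Icc 1 (K + 1)) (hμ : ∀ᵐ p ∂μ, p.2 ∈ Icc 1 (K + 1)) :
    Integrable (fun p => ℓ (h p.1) p.2) μ :=
  .of_bound (measurable_loss hm).aestronglyMeasurable B (ae_norm_loss_le hl_nonneg hB hr hμ)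

end Loss

section Risk

variable {ℓ : ℕ → ℕ → ℝ} {B : ℝ} {h : 𝒳 → ℕ} (D : Domain 𝒳 K)

theorem riskOut_eq_integral : riskOut ℓ D h = ∫ p, ℓ (h p.1) p.2 ∂D.DO :=
  integral_congr_ae (D.ae_label_eq_DO.mono fun p hp => by simp only [hp])

theorem norm_riskIn_le (hl_nonneg : ∀ y₁ y₂, 0 ≤ ℓ y₁ y₂)
    (hB : ∀ y₁ ∈ Icc 1 (K + 1), ∀ y₂ ∈ Icc 1 (K + 1), ℓ y₁ y₂ ≤ B)
    (hr : ∀ x, h x ∈ Icc 1 (K + 1)) : ‖riskIn ℓ D h‖ ≤ B := by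
  simpa [riskIn] using norm_integral_le_of_norm_le_const
    (ae_norm_loss_le hl_nonneg hB hr D.ae_label_mem_Icc_succ_DI)

theorem norm_riskOut_le (hl_nonneg : ∀ y₁ y₂, 0 ≤ ℓ y₁ y₂)
    (hB : ∀ y₁ ∈ Icc 1 (K + 1), ∀ y₂ ∈ Icc 1 (K + 1), ℓ y₁ y₂ ≤ B)
    (hr : ∀ x, h x ∈ Icc 1 (K + 1)) : ‖riskOut ℓ D h‖ ≤ B := by
  simpa [riskOut_eq_integral] using norm_integral_le_of_norm_le_const
    (ae_norm_loss_le hl_nonneg hB hr D.ae_label_mem_Icc_succ_DO)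

theorem risk_withPrior (hl_nonneg : ∀ y₁ y₂, 0 ≤ ℓ y₁ y₂)
    (hB : ∀ y₁ ∈ Icc 1 (K + 1), ∀ y₂ ∈ Icc 1 (K + 1), ℓ y₁ y₂ ≤ B)
    (hm : Measurable h) (hr : ∀ x, h x ∈ Icc 1 (K + 1)) (α : Ico (0 : ℝ) 1) :
    risk ℓ (D.withPrior α) h = riskA ℓ D h α := by
  have hI := integrable_loss hl_nonneg hB hm hr D.ae_label_mem_Icc_succ_DI
  have hO := integrable_loss hl_nonneg hB hm hr D.ae_label_mem_Icc_succ_DO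
  change ∫ p, ℓ (h p.1) p.2 ∂(ENNReal.ofReal (1 - α.1) • D.DI + ENNReal.ofReal α.1 • D.DO) = _
  rw [integral_add_measure (hI.smul_measure ENNReal.ofReal_ne_top)
    (hO.smul_measure ENNReal.ofReal_ne_top), integral_smul_measure, integral_smul_measure,
    ENNReal.toReal_ofReal (by linarith [α.2.2]), ENNReal.toReal_ofReal α.2.1, riskA, riskIn,
    riskOut_eq_integral]
  rfl

theorem mul_margI_le_riskIn (hl_nonneg : ∀ y₁ y₂, 0 ≤ ℓ y₁ y₂)
    (hB : ∀ y₁ ∈ Icc 1 (K + 1), ∀ y₂ ∈ Icc 1 (K + 1), ℓ y₁ y₂ ≤ B)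
    (hm : Measurable h) (hr : ∀ x, h x ∈ Icc 1 (K + 1)) {c : ℝ} (hc0 : 0 ≤ c)
    (hc : ∀ y ∈ Icc 1 K, c ≤ ℓ (K + 1) y) :
    c * D.margI.real {x | h x = K + 1} ≤ riskIn ℓ D h := by
  have hs : MeasurableSet {x | h x = K + 1} := hm (measurableSet_singleton _)
  rw [Domain.margI, map_measureReal_apply measurable_fst hs]
  refine mul_measureReal_le_integral hc0 (ae_of_all _ fun _ => hl_nonneg _ _)
    (integrable_loss hl_nonneg hB hm hr D.ae_label_mem_Icc_succ_DI) ?_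
  filter_upwards [D.ae_label_mem_DI] with p hp hx
  rw [show h p.1 = K + 1 from hx]
  exact hc _ hp

theorem mul_margO_le_riskOut (hl_nonneg : ∀ y₁ y₂, 0 ≤ ℓ y₁ y₂)
    (hB : ∀ y₁ ∈ Icc 1 (K + 1), ∀ y₂ ∈ Icc 1 (K + 1), ℓ y₁ y₂ ≤ B)
    (hm : Measurable h) (hr : ∀ x, h x ∈ Icc 1 (K + 1)) {c : ℝ} (hc0 : 0 ≤ c)
    (hc : ∀ y ∈ Icc 1 K, c ≤ ℓ y (K + 1)) :
    c * D.margO.real {x | h x = K + 1}ᶜ ≤ riskOut ℓ D h := by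
  have hs : MeasurableSet {x | h x = K + 1}ᶜ := (hm (measurableSet_singleton _)).compl
  rw [Domain.margO, map_measureReal_apply measurable_fst hs, riskOut_eq_integral]
  refine mul_measureReal_le_integral hc0 (ae_of_all _ fun _ => hl_nonneg _ _)
    (integrable_loss hl_nonneg hB hm hr D.ae_label_mem_Icc_succ_DO) ?_
  filter_upwards [D.ae_label_eq_DO] with p hp hx
  have hne : h p.1 ≠ K + 1 := hx
  rw [hp]
  exact hc _ ⟨(hr p.1).1, Nat.le_of_lt_succ ((hr p.1).2.lt_of_ne hne)⟩

end Risk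

theorem HasOverlap.exists_pos_le_margI_add_margO {D : Domain 𝒳 K} (hD : HasOverlap D) :
    ∃ m > 0, ∀ s, MeasurableSet s → m ≤ D.margI.real s + D.margO.real sᶜ := by
  obtain ⟨μ, -, fI, fO, hfI, hfO, hI, hO, hpos⟩ := hD
  set m := ∫⁻ x, min (fI x) (fO x) ∂μ with hm_def
  have hle : ∀ s, MeasurableSet s → m ≤ D.margI s + D.margO sᶜ := by
    intro s hs
    rw [hm_def, ← lintegral_add_compl _ hs, hI, hO, withDensity_apply _ hs,
      withDensity_apply _ hs.compl]
    gcongr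
    exacts [min_le_left _ _, min_le_right _ _]
  have hm_pos : 0 < m := by
    rw [lintegral_pos_iff_support (hfI.min hfO)]
    exact hpos.trans_le (measure_mono fun x hx => (lt_min hx.1 hx.2).ne')
  have hm_top : m ≠ ∞ := ne_top_of_le_ne_top (by finiteness) (hle univ MeasurableSet.univ)
  refine ⟨m.toReal, ENNReal.toReal_pos hm_pos.ne' hm_top, fun s hs => ?_⟩
  rw [measureReal_def, measureReal_def, ← ENNReal.toReal_add (measure_ne_top _ _)
    (measure_ne_top _ _)]
  exact ENNReal.toReal_mono (by finiteness) (hle s hs)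

theorem HasOverlap.exists_pos_le_riskA {ℓ : ℕ → ℕ → ℝ} {B : ℝ} {D : Domain 𝒳 K}
    (hl_nonneg : ∀ y₁ y₂, 0 ≤ ℓ y₁ y₂)
    (hl_zero : ∀ y₁ ∈ Icc 1 (K + 1), ∀ y₂ ∈ Icc 1 (K + 1), (ℓ y₁ y₂ = 0 ↔ y₁ = y₂))
    (hB : ∀ y₁ ∈ Icc 1 (K + 1), ∀ y₂ ∈ Icc 1 (K + 1), ℓ y₁ y₂ ≤ B) (hD : HasOverlap D) :
    ∃ c > 0, ∀ h : 𝒳 → ℕ, Measurable h → (∀ x, h x ∈ Icc 1 (K + 1)) →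
      ∀ α ∈ Icc (0 : ℝ) 1, min α (1 - α) * c ≤ riskA ℓ D h α := by
  obtain ⟨c, hc, hcℓ⟩ := exists_pos_le_loss_ood hl_nonneg hl_zero
  obtain ⟨m, hm, hmle⟩ := hD.exists_pos_le_margI_add_margO
  refine ⟨c * m, by positivity, fun h hmeas hr α hα => ?_⟩
  set s := {x | h x = K + 1}
  have hI := mul_margI_le_riskIn D hl_nonneg hB hmeas hr hc.le fun y hy => (hcℓ y hy).1
  have hO := mul_margO_le_riskOut D hl_nonneg hB hmeas hr hc.le fun y hy => (hcℓ y hy).2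
  have hs := hmle s (hmeas (measurableSet_singleton _))
  have h1α : 0 ≤ 1 - α := sub_nonneg.2 hα.2
  calc min α (1 - α) * (c * m)
      ≤ min α (1 - α) * (c * D.margI.real s + c * D.margO.real sᶜ) := by
        rw [← mul_add]; gcongr; exact le_min hα.1 h1α
    _ ≤ (1 - α) * (c * D.margI.real s) + α * (c * D.margO.real sᶜ) := by
        rw [mul_add]; gcongr; exacts [min_le_right _ _, min_le_left _ _]
    _ ≤ riskA ℓ D h α := by unfold riskA; gcongr; exact hα.1

namespace ConsistentRisk

variable {ℓ : ℕ → ℕ → ℝ} {B : ℝ} {𝒟 : Set (Domain 𝒳 K)} {H : Set (𝒳 → ℕ)}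
  {A : Algorithm 𝒳 ℕ} {ε : ℕ → ℝ} {D : Domain 𝒳 K} {n : ℕ}

theorem riskA_eq_risk_withPrior (hA : ConsistentRisk ℓ 𝒟 H A ε)
    (hl_nonneg : ∀ y₁ y₂, 0 ≤ ℓ y₁ y₂)
    (hB : ∀ y₁ ∈ Icc 1 (K + 1), ∀ y₂ ∈ Icc 1 (K + 1), ℓ y₁ y₂ ≤ B)
    (hH : ∀ h ∈ H, Measurable h ∧ ∀ x, h x ∈ Icc 1 (K + 1)) (hn : 1 ≤ n) (α : Ico (0 : ℝ) 1) :
    (fun S => riskA ℓ D (A n S) α) = fun S => risk ℓ (D.withPrior α) (A n S) :=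
  funext fun S =>
    (risk_withPrior D hl_nonneg hB (hH _ (hA.1 n hn S)).1 (hH _ (hA.1 n hn S)).2 α).symm

theorem measurable_riskA (hA : ConsistentRisk ℓ 𝒟 H A ε)
    (hl_nonneg : ∀ y₁ y₂, 0 ≤ ℓ y₁ y₂)
    (hB : ∀ y₁ ∈ Icc 1 (K + 1), ∀ y₂ ∈ Icc 1 (K + 1), ℓ y₁ y₂ ≤ B)
    (hH : ∀ h ∈ H, Measurable h ∧ ∀ x, h x ∈ Icc 1 (K + 1))
    (hPU : PriorUnknown 𝒟) (hD : D ∈ 𝒟)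
    (hn : 1 ≤ n) (α : Ico (0 : ℝ) 1) : Measurable fun S => riskA ℓ D (A n S) α := by
  rw [hA.riskA_eq_risk_withPrior hl_nonneg hB hH hn]
  exact hA.2.1 _ (hPU D hD α) n hn

theorem integrable_riskIn (hA : ConsistentRisk ℓ 𝒟 H A ε)
    (hl_nonneg : ∀ y₁ y₂, 0 ≤ ℓ y₁ y₂)
    (hB : ∀ y₁ ∈ Icc 1 (K + 1), ∀ y₂ ∈ Icc 1 (K + 1), ℓ y₁ y₂ ≤ B)
    (hH : ∀ h ∈ H, Measurable h ∧ ∀ x, h x ∈ Icc 1 (K + 1))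
    (hPU : PriorUnknown 𝒟) (hD : D ∈ 𝒟)
    (hn : 1 ≤ n) : Integrable (fun S => riskIn ℓ D (A n S)) (sampleMeasure D n) := by
  have hmeas := hA.measurable_riskA hl_nonneg hB hH hPU hD hn ⟨0, le_rfl, one_pos⟩
  simp only [riskA, sub_zero, one_mul, zero_mul, add_zero] at hmeas
  exact .of_bound hmeas.aestronglyMeasurable B
    (ae_of_all _ fun S => norm_riskIn_le D hl_nonneg hB (hH _ (hA.1 n hn S)).2)

theorem integrable_riskOut (hA : ConsistentRisk ℓ 𝒟 H A ε)
    (hl_nonneg : ∀ y₁ y₂, 0 ≤ ℓ y₁ y₂)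
    (hB : ∀ y₁ ∈ Icc 1 (K + 1), ∀ y₂ ∈ Icc 1 (K + 1), ℓ y₁ y₂ ≤ B)
    (hH : ∀ h ∈ H, Measurable h ∧ ∀ x, h x ∈ Icc 1 (K + 1))
    (hPU : PriorUnknown 𝒟) (hD : D ∈ 𝒟)
    (hn : 1 ≤ n) : Integrable (fun S => riskOut ℓ D (A n S)) (sampleMeasure D n) := by
  have h₀ := hA.measurable_riskA hl_nonneg hB hH hPU hD hn ⟨0, le_rfl, one_pos⟩
  have h₁ := hA.measurable_riskA hl_nonneg hB hH hPU hD hn ⟨1 / 2, by norm_num, by norm_num⟩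
  have heq : (fun S => riskOut ℓ D (A n S)) =
      fun S => 2 * riskA ℓ D (A n S) (1 / 2) - riskA ℓ D (A n S) 0 := by
    funext S
    simp only [riskA]
    ring
  have hmeas : Measurable fun S => riskOut ℓ D (A n S) := heq ▸ (h₁.const_mul 2).sub h₀
  exact .of_bound hmeas.aestronglyMeasurable B
    (ae_of_all _ fun S => norm_riskOut_le D hl_nonneg hB (hH _ (hA.1 n hn S)).2)

theorem integrable_riskA (hA : ConsistentRisk ℓ 𝒟 H A ε)
    (hl_nonneg : ∀ y₁ y₂, 0 ≤ ℓ y₁ y₂)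
    (hB : ∀ y₁ ∈ Icc 1 (K + 1), ∀ y₂ ∈ Icc 1 (K + 1), ℓ y₁ y₂ ≤ B)
    (hH : ∀ h ∈ H, Measurable h ∧ ∀ x, h x ∈ Icc 1 (K + 1))
    (hPU : PriorUnknown 𝒟) (hD : D ∈ 𝒟)
    (hn : 1 ≤ n) (α : ℝ) : Integrable (fun S => riskA ℓ D (A n S) α) (sampleMeasure D n) :=
  ((hA.integrable_riskIn hl_nonneg hB hH hPU hD hn).const_mul _).add
    ((hA.integrable_riskOut hl_nonneg hB hH hPU hD hn).const_mul _)

theorem integral_riskA (hA : ConsistentRisk ℓ 𝒟 H A ε)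
    (hl_nonneg : ∀ y₁ y₂, 0 ≤ ℓ y₁ y₂)
    (hB : ∀ y₁ ∈ Icc 1 (K + 1), ∀ y₂ ∈ Icc 1 (K + 1), ℓ y₁ y₂ ≤ B)
    (hH : ∀ h ∈ H, Measurable h ∧ ∀ x, h x ∈ Icc 1 (K + 1))
    (hPU : PriorUnknown 𝒟) (hD : D ∈ 𝒟)
    (hn : 1 ≤ n) (α : ℝ) :
    ∫ S, riskA ℓ D (A n S) α ∂sampleMeasure D n =
      (1 - α) * ∫ S, riskIn ℓ D (A n S) ∂sampleMeasure D n +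
        α * ∫ S, riskOut ℓ D (A n S) ∂sampleMeasure D n := by
  rw [← integral_const_mul, ← integral_const_mul, ← integral_add]
  · rfl
  exacts [(hA.integrable_riskIn hl_nonneg hB hH hPU hD hn).const_mul _,
    (hA.integrable_riskOut hl_nonneg hB hH hPU hD hn).const_mul _]

theorem integral_riskA_le (hA : ConsistentRisk ℓ 𝒟 H A ε)
    (hl_nonneg : ∀ y₁ y₂, 0 ≤ ℓ y₁ y₂)
    (hB : ∀ y₁ ∈ Icc 1 (K + 1), ∀ y₂ ∈ Icc 1 (K + 1), ℓ y₁ y₂ ≤ B)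
    (hH : ∀ h ∈ H, Measurable h ∧ ∀ x, h x ∈ Icc 1 (K + 1))
    (hPU : PriorUnknown 𝒟) (hD : D ∈ 𝒟)
    (hn : 1 ≤ n) {h : 𝒳 → ℕ} (hh : h ∈ H) (α : Ico (0 : ℝ) 1) :
    ∫ S, riskA ℓ D (A n S) α ∂sampleMeasure D n ≤ ε n + riskA ℓ D h α := by
  have hcons := hA.2.2 _ (hPU D hD α) n hn
  have hinf : (⨅ h : H, risk ℓ (D.withPrior α) h.1) ≤ riskA ℓ D h α := by
    rw [← risk_withPrior D hl_nonneg hB (hH h hh).1 (hH h hh).2]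
    refine ciInf_le ⟨0, ?_⟩ (⟨h, hh⟩ : H)
    rintro _ ⟨h', rfl⟩
    exact integral_nonneg fun _ => hl_nonneg _ _
  have hrisk := hA.riskA_eq_risk_withPrior (D := D) hl_nonneg hB hH hn α
  have hint : Integrable (fun S => risk ℓ (D.withPrior α) (A n S)) (sampleMeasure D n) :=
    hrisk ▸ hA.integrable_riskA hl_nonneg hB hH hPU hD hn α
  rw [Domain.sampleMeasure_withPrior, integral_sub hint (integrable_const _), ← hrisk,
    integral_const, probReal_univ, one_smul] at hcons
  linarith

theorem integral_riskIn_le (hA : ConsistentRisk ℓ 𝒟 H A ε)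
    (hl_nonneg : ∀ y₁ y₂, 0 ≤ ℓ y₁ y₂)
    (hB : ∀ y₁ ∈ Icc 1 (K + 1), ∀ y₂ ∈ Icc 1 (K + 1), ℓ y₁ y₂ ≤ B)
    (hH : ∀ h ∈ H, Measurable h ∧ ∀ x, h x ∈ Icc 1 (K + 1))
    (hPU : PriorUnknown 𝒟) (hD : D ∈ 𝒟)
    (hn : 1 ≤ n) {h : 𝒳 → ℕ} (hh : h ∈ H) :
    ∫ S, riskIn ℓ D (A n S) ∂sampleMeasure D n ≤ ε n + riskIn ℓ D h := by
  simpa [riskA] using hA.integral_riskA_le hl_nonneg hB hH hPU hD hn hh ⟨0, le_rfl, one_pos⟩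

-- A prior-unknown space only guarantees the priors `α < 1`: the OOD risk is reached as `α → 1`.
theorem integral_riskOut_le (hA : ConsistentRisk ℓ 𝒟 H A ε)
    (hl_nonneg : ∀ y₁ y₂, 0 ≤ ℓ y₁ y₂)
    (hB : ∀ y₁ ∈ Icc 1 (K + 1), ∀ y₂ ∈ Icc 1 (K + 1), ℓ y₁ y₂ ≤ B)
    (hH : ∀ h ∈ H, Measurable h ∧ ∀ x, h x ∈ Icc 1 (K + 1))
    (hPU : PriorUnknown 𝒟) (hD : D ∈ 𝒟)
    (hn : 1 ≤ n) {h : 𝒳 → ℕ} (hh : h ∈ H) :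
    ∫ S, riskOut ℓ D (A n S) ∂sampleMeasure D n ≤ ε n + riskOut ℓ D h := by
  refine le_of_forall_Ico_combo_le (a := ∫ S, riskIn ℓ D (A n S) ∂sampleMeasure D n)
    (a' := ε n + riskIn ℓ D h) fun α hα => ?_
  have hle := hA.integral_riskA_le hl_nonneg hB hH hPU hD hn hh ⟨α, hα⟩
  rw [hA.integral_riskA hl_nonneg hB hH hPU hD hn] at hle
  unfold riskA at hle
  linear_combination hle

theorem integral_riskA_le_of_iInf_eq_zero (hA : ConsistentRisk ℓ 𝒟 H A ε)
    (hl_nonneg : ∀ y₁ y₂, 0 ≤ ℓ y₁ y₂)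
    (hB : ∀ y₁ ∈ Icc 1 (K + 1), ∀ y₂ ∈ Icc 1 (K + 1), ℓ y₁ y₂ ≤ B)
    (hH : ∀ h ∈ H, Measurable h ∧ ∀ x, h x ∈ Icc 1 (K + 1)) (hHne : H.Nonempty)
    (hPU : PriorUnknown 𝒟) (hD : D ∈ 𝒟) (hn : 1 ≤ n)
    (hin : (⨅ h : H, riskIn ℓ D h.1) = 0) (hout : (⨅ h : H, riskOut ℓ D h.1) = 0)
    {α : ℝ} (hα : α ∈ Icc (0 : ℝ) 1) :
    ∫ S, riskA ℓ D (A n S) α ∂sampleMeasure D n ≤ ε n := by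
  have := hHne.to_subtype
  have hI : ∫ S, riskIn ℓ D (A n S) ∂sampleMeasure D n - ε n ≤ 0 := hin ▸ le_ciInf fun h =>
    sub_le_iff_le_add'.2 (hA.integral_riskIn_le hl_nonneg hB hH hPU hD hn h.2)
  have hO : ∫ S, riskOut ℓ D (A n S) ∂sampleMeasure D n - ε n ≤ 0 := hout ▸ le_ciInf fun h =>
    sub_le_iff_le_add'.2 (hA.integral_riskOut_le hl_nonneg hB hH hPU hD hn h.2)
  rw [hA.integral_riskA hl_nonneg hB hH hPU hD hn]
  calc (1 - α) * ∫ S, riskIn ℓ D (A n S) ∂sampleMeasure D n +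
        α * ∫ S, riskOut ℓ D (A n S) ∂sampleMeasure D n ≤ (1 - α) * ε n + α * ε n := by
        have h1α : 0 ≤ 1 - α := sub_nonneg.2 hα.2
        gcongr <;> linarith [hα.1]
    _ = ε n := by ring

end ConsistentRisk

theorem not_learnableRisk_of_pos_le_riskA {ℓ : ℕ → ℕ → ℝ} {B : ℝ} {𝒟 : Set (Domain 𝒳 K)}
    {H : Set (𝒳 → ℕ)} {D : Domain 𝒳 K} (hl_nonneg : ∀ y₁ y₂, 0 ≤ ℓ y₁ y₂)
    (hB : ∀ y₁ ∈ Icc 1 (K + 1), ∀ y₂ ∈ Icc 1 (K + 1), ℓ y₁ y₂ ≤ B)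
    (hH : ∀ h ∈ H, Measurable h ∧ ∀ x, h x ∈ Icc 1 (K + 1)) (hHne : H.Nonempty)
    (hPU : PriorUnknown 𝒟) (hD : D ∈ 𝒟)
    (hin : (⨅ h : H, riskIn ℓ D h.1) = 0) (hout : (⨅ h : H, riskOut ℓ D h.1) = 0)
    {α c : ℝ} (hα : α ∈ Icc (0 : ℝ) 1) (hc : 0 < c) (hcH : ∀ h ∈ H, c ≤ riskA ℓ D h α) :
    ¬ LearnableRisk ℓ 𝒟 H := by
  rintro ⟨ε, -, hε, A, hA⟩
  have hcε : ∀ n ≥ 1, c ≤ ε n := fun n hn =>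
    calc c = ∫ _, c ∂sampleMeasure D n := by simp
      _ ≤ ∫ S, riskA ℓ D (A n S) α ∂sampleMeasure D n :=
        integral_mono (integrable_const c) (hA.integrable_riskA hl_nonneg hB hH hPU hD hn α)
          fun S => hcH _ (hA.1 n hn S)
      _ ≤ ε n :=
        hA.integral_riskA_le_of_iInf_eq_zero hl_nonneg hB hH hHne hPU hD hn hin hout hα
  linarith [ge_of_tendsto hε (eventually_atTop.2 ⟨1, hcε⟩)]

/-- Lemma 3 / Theorem `T5` of the paper.  In a prior-unknown space `𝒟`,
if some domain `D ∈ 𝒟` has overlap between ID and OOD and both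
`inf_{h∈H} R_D^in(h) = 0` and `inf_{h∈H} R_D^out(h) = 0`, then `inf_{h∈H} R_D^α(h) > 0`
for every `α ∈ (0,1)`, the linear condition under risk fails, and OOD detection is not
learnable under risk in `𝒟` for `H`. -/
theorem stmt4 {d K : ℕ} (X : Set (EuclideanSpace ℝ (Fin d)))
    (ℓ : ℕ → ℕ → ℝ)
    (hl_nonneg : ∀ y₁ y₂, 0 ≤ ℓ y₁ y₂)
    (hl_zero : ∀ y₁ ∈ Set.Icc 1 (K + 1), ∀ y₂ ∈ Set.Icc 1 (K + 1), (ℓ y₁ y₂ = 0 ↔ y₁ = y₂))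
    (hl_bdd : ∃ B, ∀ y₁ ∈ Set.Icc 1 (K + 1), ∀ y₂ ∈ Set.Icc 1 (K + 1), ℓ y₁ y₂ ≤ B)
    (H : Set (↥X → ℕ)) (hHne : H.Nonempty)
    (hH : ∀ h ∈ H, Measurable h ∧ ∀ x, h x ∈ Set.Icc 1 (K + 1))
    (𝒟 : Set (Domain ↥X K)) (hPU : PriorUnknown 𝒟)
    (D : Domain ↥X K) (hD : D ∈ 𝒟) (hover : HasOverlap D)
    (hin : (⨅ h : H, riskIn ℓ D h.1) = 0)
    (hout : (⨅ h : H, riskOut ℓ D h.1) = 0) :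
    (∀ α ∈ Set.Ioo (0 : ℝ) 1, 0 < ⨅ h : H, riskA ℓ D h.1 α) ∧
    ¬ (∀ D' ∈ 𝒟, ∀ α ∈ Set.Ico (0 : ℝ) 1,
        (⨅ h : H, riskA ℓ D' h.1 α)
          = (1 - α) * (⨅ h : H, riskIn ℓ D' h.1) + α * (⨅ h : H, riskOut ℓ D' h.1)) ∧
    ¬ LearnableRisk ℓ 𝒟 H := by
  obtain ⟨B, hB⟩ := hl_bdd
  obtain ⟨c, hc, hcH⟩ := hover.exists_pos_le_riskA hl_nonneg hl_zero hB
  have hcH' : ∀ α ∈ Icc (0 : ℝ) 1, ∀ h ∈ H, min α (1 - α) * c ≤ riskA ℓ D h α :=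
    fun α hα h hh => hcH h (hH h hh).1 (hH h hh).2 α hα
  have hpos : ∀ α ∈ Ioo (0 : ℝ) 1, 0 < ⨅ h : H, riskA ℓ D h.1 α := fun α hα =>
    have := hHne.to_subtype
    (mul_pos (lt_min hα.1 (sub_pos.2 hα.2)) hc).trans_le
      (le_ciInf fun h => hcH' α (Ioo_subset_Icc_self hα) h.1 h.2)
  have hhalf : (1 / 2 : ℝ) ∈ Ioo (0 : ℝ) 1 := ⟨by norm_num, by norm_num⟩
  refine ⟨hpos, fun hlin => ?_, not_learnableRisk_of_pos_le_riskA hl_nonneg hB hH hHne hPU hD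
    hin hout (Ioo_subset_Icc_self hhalf) (by positivity) (hcH' _ (Ioo_subset_Icc_self hhalf))⟩
  have hzero := hlin D hD (1 / 2) (Ioo_subset_Ico_self hhalf)
  rw [hin, hout] at hzero
  linarith [hpos _ hhalf]

end OODF

end
end

section
/- Let H be a hypothesis space and let φ : Y_all → {1,2} map every ID label in Y to 1 and the OOD label K+1 to 2. If |φ∘H| > 1, where φ∘H = {φ∘h : h ∈ H} (equivalently, there exist x ∈ X and h₁, h₂ ∈ H with h₁(x) ∈ Y and h₂(x) = K+1), then OOD detection is not learnable under risk in the total space 𝒟^all (the domain space consisting of all domains) for H. -/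
open MeasureTheory Filter Set
open scoped ENNReal NNReal

noncomputable section

namespace OODF

variable {𝒳 : Type*} [MeasurableSpace 𝒳] {K : ℕ}

/-!
Fix the feature `x` at which `h₁` predicts an ID label `k` and `h₂` predicts `K + 1`, and let
`D_p` be the domain with `D_I = δ_(x,k)`, `D_O = δ_(x,K+1)` and prior `p`. Samples are drawn
from `D_I` alone, so every `D_p` produces the same samples. Consistency at `p = 0` (compared
with `h₁`) bounds the expected loss `ℓ(A(S)(x), k)` by `ε n`; consistency at `D_p` (compared
with `h₂`) bounds the expected risk `(1 - p) ℓ(A(S)(x), k) + p ℓ(A(S)(x), K + 1)` by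
`ε n + (1 - p) ℓ(K + 1, k)`. Every label `a` has `ℓ(a, k) + ℓ(a, K + 1) ≥ c > 0`, so
`p c - (1 - p) ℓ(K + 1, k) ≤ 2 ε n`; letting `n → ∞` and then `p → 1` gives `c ≤ 0`.
-/

open scoped Topology

instance (D : Domain 𝒳 K) (n : ℕ) : IsProbabilityMeasure (sampleMeasure D n) :=
  letI := D.probI
  inferInstanceAs (IsProbabilityMeasure (Measure.pi fun _ => D.DI))

lemma sampleMeasure_withPrior (D : Domain 𝒳 K) (α : Set.Ico (0 : ℝ) 1) (n : ℕ) :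
    sampleMeasure (D.withPrior α) n = sampleMeasure D n :=
  rfl

lemma risk_nonneg {ℓ : ℕ → ℕ → ℝ} (hℓ : ∀ y₁ y₂, 0 ≤ ℓ y₁ y₂) (D : Domain 𝒳 K)
    (h : 𝒳 → ℕ) : 0 ≤ risk ℓ D h :=
  integral_nonneg fun _ => hℓ _ _

lemma ConsistentRisk.integral_risk_le {ℓ : ℕ → ℕ → ℝ} (hℓ : ∀ y₁ y₂, 0 ≤ ℓ y₁ y₂)
    {𝒟 : Set (Domain 𝒳 K)} {H : Set (𝒳 → ℕ)} {A : Algorithm 𝒳 ℕ} {ε : ℕ → ℝ}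
    (hA : ConsistentRisk ℓ 𝒟 H A ε) {D : Domain 𝒳 K} (hD : D ∈ 𝒟) {n : ℕ} (hn : 1 ≤ n)
    (hint : Integrable (fun S => risk ℓ D (A n S)) (sampleMeasure D n))
    {h : 𝒳 → ℕ} (hh : h ∈ H) :
    ∫ S, risk ℓ D (A n S) ∂sampleMeasure D n ≤ ε n + risk ℓ D h := by
  have hexcess := hA.2.2 D hD n hn
  rw [integral_sub hint (integrable_const _), integral_const, probReal_univ, one_smul]
    at hexcess
  have hinf : ⨅ g : H, risk ℓ D g.1 ≤ risk ℓ D h :=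
    ciInf_le ⟨0, by rintro _ ⟨g, rfl⟩; exact risk_nonneg hℓ D g.1⟩ (⟨h, hh⟩ : H)
  linarith

lemma loss_add_pos {ℓ : ℕ → ℕ → ℝ} (hℓ : ∀ y₁ y₂, 0 ≤ ℓ y₁ y₂) {s : Set ℕ}
    (hzero : ∀ y₁ ∈ s, ∀ y₂ ∈ s, (ℓ y₁ y₂ = 0 ↔ y₁ = y₂)) {a y₁ y₂ : ℕ} (ha : a ∈ s)
    (hy₁ : y₁ ∈ s) (hy₂ : y₂ ∈ s) (hne : y₁ ≠ y₂) : 0 < ℓ a y₁ + ℓ a y₂ := by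
  rcases (hℓ a y₁).lt_or_eq with h₁ | h₁
  · linarith [hℓ a y₂]
  · have ha₁ : a = y₁ := (hzero a ha y₁ hy₁).1 h₁.symm
    have h₂ : ℓ a y₂ ≠ 0 := fun h₂ => hne (ha₁ ▸ (hzero a ha y₂ hy₂).1 h₂)
    linarith [(hℓ a y₂).lt_of_ne' h₂]

def diracDomain (x : 𝒳) (k : ℕ) (hk : k ∈ Set.Icc 1 K) : Domain 𝒳 K where
  DI := Measure.dirac (x, k)
  DO := Measure.dirac (x, K + 1)
  prior := 0
  probI := inferInstance
  probO := inferInstance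
  suppI := (dirac_eq_zero_iff_not_mem
    (measurable_snd (.of_discrete (s := {y : ℕ | y ∉ Set.Icc 1 K})))).2 (not_not.2 hk)
  suppO := (dirac_eq_zero_iff_not_mem
    (measurable_snd (.of_discrete (s := {y : ℕ | y ≠ K + 1})))).2 (not_not.2 rfl)
  prior_mem := ⟨le_rfl, zero_lt_one⟩

section MeasurableSingletonClass

variable [MeasurableSingletonClass 𝒳]

lemma risk_diracDomain_withPrior (ℓ : ℕ → ℕ → ℝ) (x : 𝒳) {k : ℕ} (hk : k ∈ Set.Icc 1 K)
    (p : Set.Ico (0 : ℝ) 1) (h : 𝒳 → ℕ) :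
    risk ℓ ((diracDomain x k hk).withPrior p) h
      = (1 - p) * ℓ (h x) k + p * ℓ (h x) (K + 1) := by
  have hint (a : 𝒳 × ℕ) : Integrable (fun q : 𝒳 × ℕ => ℓ (h q.1) q.2) (Measure.dirac a) :=
    integrable_dirac enorm_lt_top
  simp only [risk, Domain.joint, Domain.withPrior, diracDomain]
  rw [integral_add_measure ((hint _).smul_measure ENNReal.ofReal_ne_top)
      ((hint _).smul_measure ENNReal.ofReal_ne_top),
    integral_smul_measure, integral_smul_measure, integral_dirac, integral_dirac,
    ENNReal.toReal_ofReal (sub_nonneg.2 p.2.2.le), ENNReal.toReal_ofReal p.2.1, smul_eq_mul,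
    smul_eq_mul]

lemma ConsistentRisk.prior_mul_sub_le {ℓ : ℕ → ℕ → ℝ}
    (hℓ : ∀ y₁ y₂, 0 ≤ ℓ y₁ y₂)
    (hzero : ∀ y₁ ∈ Set.Icc 1 (K + 1), ∀ y₂ ∈ Set.Icc 1 (K + 1), (ℓ y₁ y₂ = 0 ↔ y₁ = y₂))
    {H : Set (𝒳 → ℕ)} (hH : ∀ h ∈ H, ∀ x, h x ∈ Set.Icc 1 (K + 1)) {A : Algorithm 𝒳 ℕ}
    {ε : ℕ → ℝ} (hA : ConsistentRisk ℓ (Set.univ : Set (Domain 𝒳 K)) H A ε) {x : 𝒳}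
    {h₁ h₂ : 𝒳 → ℕ} (hh₁ : h₁ ∈ H) (hh₂ : h₂ ∈ H) (hk : h₁ x ∈ Set.Icc 1 K)
    (hK : h₂ x = K + 1) {c : ℝ} (hc : ∀ a ∈ Set.Icc 1 (K + 1), c ≤ ℓ a (h₁ x) + ℓ a (K + 1))
    (p : Set.Ico (0 : ℝ) 1) {n : ℕ} (hn : 1 ≤ n) :
    p * c - (1 - p) * ℓ (K + 1) (h₁ x) ≤ 2 * ε n := by
  have hk' : h₁ x ∈ Set.Icc 1 (K + 1) := ⟨hk.1, hk.2.trans K.le_succ⟩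
  have hK' : K + 1 ∈ Set.Icc 1 (K + 1) := ⟨K.succ_pos, le_rfl⟩
  set D := diracDomain x (h₁ x) hk
  set μ := sampleMeasure D n
  have hrange (S : Fin n → 𝒳 × ℕ) : A n S x ∈ Set.Icc 1 (K + 1) := hH _ (hA.1 n hn S) x
  have hrisk (q : Set.Ico (0 : ℝ) 1) (h : 𝒳 → ℕ) := risk_diracDomain_withPrior ℓ x hk q h
  obtain ⟨B, hB⟩ := ((Set.finite_Icc 1 (K + 1)).image
    fun a => ℓ a (h₁ x) + ℓ a (K + 1)).bddAbove
  have hint (q : Set.Ico (0 : ℝ) 1) :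
      Integrable (fun S => risk ℓ (D.withPrior q) (A n S)) μ := by
    refine .of_bound (hA.2.1 _ trivial n hn).aestronglyMeasurable B (.of_forall fun S => ?_)
    have hBS := hB ⟨_, hrange S, rfl⟩
    rw [Real.norm_of_nonneg (risk_nonneg hℓ _ _), hrisk]
    nlinarith [hℓ (A n S x) (h₁ x), hℓ (A n S x) (K + 1), q.2.1, q.2.2]
  let q₀ : Set.Ico (0 : ℝ) 1 := ⟨0, le_rfl, zero_lt_one⟩
  have hin : ∫ S, risk ℓ (D.withPrior q₀) (A n S) ∂μ ≤ ε n := by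
    have := hA.integral_risk_le hℓ trivial hn (hint q₀) hh₁
    rw [hrisk, (hzero _ hk' _ hk').2 rfl] at this
    simpa [q₀, sampleMeasure_withPrior] using this
  have hout : ∫ S, risk ℓ (D.withPrior p) (A n S) ∂μ ≤ ε n + (1 - p) * ℓ (K + 1) (h₁ x) := by
    have := hA.integral_risk_le hℓ trivial hn (hint p) hh₂
    rwa [hrisk, hK, (hzero _ hK' _ hK').2 rfl, mul_zero, add_zero] at this
  -- a single answer `a` pays `(1 - p) ℓ a k + p ℓ a (K + 1) ≥ p c - ℓ a k`
  have hpoint (S : Fin n → 𝒳 × ℕ) :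
      p * c - risk ℓ (D.withPrior q₀) (A n S) ≤ risk ℓ (D.withPrior p) (A n S) := by
    rw [hrisk, hrisk]
    nlinarith [hc _ (hrange S), hℓ (A n S x) (h₁ x), p.2.1, p.2.2]
  have hmean := integral_mono (f := fun S => p * c - risk ℓ (D.withPrior q₀) (A n S))
    ((integrable_const _).sub (hint q₀)) (hint p) hpoint
  rw [integral_sub (integrable_const _) (hint q₀), integral_const, probReal_univ, one_smul]
    at hmean
  linarith

end MeasurableSingletonClass

theorem stmt5_general {d K : ℕ} (X : Set (EuclideanSpace ℝ (Fin d)))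
    (ℓ : ℕ → ℕ → ℝ)
    (hl_nonneg : ∀ y₁ y₂, 0 ≤ ℓ y₁ y₂)
    (hl_zero : ∀ y₁ ∈ Set.Icc 1 (K + 1), ∀ y₂ ∈ Set.Icc 1 (K + 1), (ℓ y₁ y₂ = 0 ↔ y₁ = y₂))
    (H : Set (↥X → ℕ)) (hH : ∀ h ∈ H, Measurable h ∧ ∀ x, h x ∈ Set.Icc 1 (K + 1))
    (hnontriv : ∃ x : ↥X, ∃ h₁ ∈ H, ∃ h₂ ∈ H, h₁ x ∈ Set.Icc 1 K ∧ h₂ x = K + 1) :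
    ¬ LearnableRisk ℓ (Set.univ : Set (Domain ↥X K)) H := by
  obtain ⟨x, h₁, hh₁, h₂, hh₂, hk, hK⟩ := hnontriv
  rintro ⟨ε, -, hε, A, hA⟩
  have hk' : h₁ x ∈ Set.Icc 1 (K + 1) := ⟨hk.1, hk.2.trans K.le_succ⟩
  have hK' : K + 1 ∈ Set.Icc 1 (K + 1) := ⟨K.succ_pos, le_rfl⟩
  obtain ⟨a, ha, hmin⟩ := Set.exists_min_image _ (fun a => ℓ a (h₁ x) + ℓ a (K + 1))
    (Set.finite_Icc 1 (K + 1)) ⟨_, hK'⟩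
  set c := ℓ a (h₁ x) + ℓ a (K + 1)
  have hc : 0 < c := loss_add_pos hl_nonneg hl_zero ha hk' hK' (by have := hk.2; omega)
  set L := ℓ (K + 1) (h₁ x)
  have hbound (p : Set.Ico (0 : ℝ) 1) : p * c - (1 - p) * L ≤ 0 :=
    ge_of_tendsto (by simpa using hε.const_mul 2) <| eventually_atTop.2 ⟨1, fun n hn =>
      hA.prior_mul_sub_le hl_nonneg hl_zero (fun h hh => (hH h hh).2) hh₁ hh₂ hk hK hmin p hn⟩
  have hlim : Tendsto (fun p : ℝ => p * c - (1 - p) * L) (𝓝[<] 1) (𝓝 (1 * c - (1 - 1) * L)) :=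
    (Continuous.tendsto (by fun_prop) 1).mono_left nhdsWithin_le_nhds
  have hle := le_of_tendsto hlim <| eventually_of_mem (Ioo_mem_nhdsLT zero_lt_one)
    fun p hp => hbound ⟨p, hp.1.le, hp.2⟩
  linarith

/-- Theorem 4 of the paper: impossibility for the total space under
risk.  If the binarized hypothesis space `φ∘H` is non-trivial, i.e. there are `x ∈ X` and
`h₁, h₂ ∈ H` with `h₁(x) ∈ Y` and `h₂(x) = K+1`, then OOD detection is not learnable under
risk in the total space (the space of all domains) for `H`. -/
theorem stmt5 {d K : ℕ} (X : Set (EuclideanSpace ℝ (Fin d)))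
    (ℓ : ℕ → ℕ → ℝ)
    (hl_nonneg : ∀ y₁ y₂, 0 ≤ ℓ y₁ y₂)
    (hl_zero : ∀ y₁ ∈ Set.Icc 1 (K + 1), ∀ y₂ ∈ Set.Icc 1 (K + 1), (ℓ y₁ y₂ = 0 ↔ y₁ = y₂))
    (hl_bdd : ∃ B, ∀ y₁ ∈ Set.Icc 1 (K + 1), ∀ y₂ ∈ Set.Icc 1 (K + 1), ℓ y₁ y₂ ≤ B)
    (H : Set (↥X → ℕ)) (hH : ∀ h ∈ H, Measurable h ∧ ∀ x, h x ∈ Set.Icc 1 (K + 1))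
    (hnontriv : ∃ x : ↥X, ∃ h₁ ∈ H, ∃ h₂ ∈ H, h₁ x ∈ Set.Icc 1 K ∧ h₂ x = K + 1) :
    ¬ LearnableRisk ℓ (Set.univ : Set (Domain ↥X K)) H :=
  stmt5_general X ℓ hl_nonneg hl_zero H hH hnontriv

end OODF

end
end
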